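/- KM erasure postulate E2 holds for PEKB belief erasure under satisfiability of P: for all PEKBs P and Q, if P is consistent and P ⊨ ¬Q (P entails the NNF-negation of every element of Q), then P ⊖ Q ≡ P. -/

import Mathlib

/-- Modal formulae over atomic propositions `Atom` and agents `Agt`. -/
inductive Form (Atom Agt : Type) : Type
  | top : Form Atom Agt
  | bot : Form Atom Agt
  | atom : Atom → Form Atom Agt
  | neg : Form Atom Agt → Form Atom Agt
  | and : Form Atom Agt → Form Atom Agt → Form Atom Agt
  | box : Agt → Form Atom Agt → Form Atom Agt

/-- `◇_i φ` abbreviates `¬ B_i ¬ φ`. -/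
def Form.dia {Atom Agt : Type} (i : Agt) (φ : Form Atom Agt) : Form Atom Agt :=
  Form.neg (Form.box i (Form.neg φ))

/-- A Kripke structure: worlds, a valuation, and an accessibility relation per agent. -/
structure Kripke (Atom Agt : Type) where
  W : Type
  val : W → Atom → Prop
  R : Agt → W → W → Prop

/-- Every accessibility relation is serial: every world has a successor. -/
def Kripke.Serial {Atom Agt : Type} (M : Kripke Atom Agt) : Prop :=
  ∀ (i : Agt) (w : M.W), ∃ v : M.W, M.R i w v

/-- Satisfaction of a formula at a world of a Kripke structure. -/
def Sat {Atom Agt : Type} (M : Kripke Atom Agt) : M.W → Form Atom Agt → Prop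
  | _, Form.top => True
  | _, Form.bot => False
  | w, Form.atom p => M.val w p
  | w, Form.neg φ => ¬ Sat M w φ
  | w, Form.and φ ψ => Sat M w φ ∧ Sat M w ψ
  | w, Form.box i φ => ∀ v : M.W, M.R i w v → Sat M v φ

/-- KD_n entailment from a set of formulae: truth at every world of every serial
Kripke structure satisfying all members of `S`. -/
def SetEntails {Atom Agt : Type} (S : Set (Form Atom Agt)) (φ : Form Atom Agt) : Prop :=
  ∀ (M : Kripke Atom Agt), M.Serial → ∀ w : M.W, (∀ ψ ∈ S, Sat M w ψ) → Sat M w φ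

/-- KD_n entailment between single formulae. -/
def Entails {Atom Agt : Type} (φ ψ : Form Atom Agt) : Prop :=
  SetEntails {φ} ψ

/-- A set of formulae is consistent iff all its members hold simultaneously at
some world of some serial Kripke structure. -/
def Consistent {Atom Agt : Type} (S : Set (Form Atom Agt)) : Prop :=
  ∃ (M : Kripke Atom Agt), M.Serial ∧ ∃ w : M.W, ∀ ψ ∈ S, Sat M w ψ

/-- Restricted modal literals: a (possibly empty) sequence of `B_i`/`◇_i`
operators applied to a propositional literal. -/
inductive IsRML {Atom Agt : Type} : Form Atom Agt → Prop
  | pos (p : Atom) : IsRML (Form.atom p)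
  | neg (p : Atom) : IsRML (Form.neg (Form.atom p))
  | box (i : Agt) {φ : Form Atom Agt} : IsRML φ → IsRML (Form.box i φ)
  | dia (i : Agt) {φ : Form Atom Agt} : IsRML φ → IsRML (Form.dia i φ)

/-- A proper epistemic knowledge base: a finite set of RMLs. -/
def IsPEKB {Atom Agt : Type} (S : Set (Form Atom Agt)) : Prop :=
  S.Finite ∧ ∀ φ ∈ S, IsRML φ

/-- Entailment of every member of a set (PEKB) from a set. -/
def KBEntails {Atom Agt : Type} (S T : Set (Form Atom Agt)) : Prop :=
  ∀ φ ∈ T, SetEntails S φ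

/-- Logical equivalence of two sets of formulae. -/
def KBEquiv {Atom Agt : Type} (S T : Set (Form Atom Agt)) : Prop :=
  KBEntails S T ∧ KBEntails T S

/-- Upward closure: the RMLs entailed by some member of `S`. -/
def upSet {Atom Agt : Type} (S : Set (Form Atom Agt)) : Set (Form Atom Agt) :=
  {ψ | IsRML ψ ∧ ∃ φ ∈ S, Entails φ ψ}

/-- Downward closure: the RMLs entailing some member of `S`. -/
def downSet {Atom Agt : Type} (S : Set (Form Atom Agt)) : Set (Form Atom Agt) :=
  {ψ | IsRML ψ ∧ ∃ φ ∈ S, Entails ψ φ}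

/-- Maximal elements of a set of RMLs under entailment. -/
def maxSet {Atom Agt : Type} (S : Set (Form Atom Agt)) : Set (Form Atom Agt) :=
  {φ ∈ S | ∀ ψ ∈ S, Entails ψ φ → Entails φ ψ}

/-- NNF-negation of an RML: push the negation through the modalities. -/
def nnfNeg {Atom Agt : Type} : Form Atom Agt → Form Atom Agt
  | Form.atom p => Form.neg (Form.atom p)
  | Form.neg (Form.atom p) => Form.atom p
  | Form.neg (Form.box i (Form.neg φ)) => Form.box i (nnfNeg φ)
  | Form.box i φ => Form.dia i (nnfNeg φ)
  | φ => φ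

/-- NNF-negation of every member of a PEKB. -/
def negKB {Atom Agt : Type} (S : Set (Form Atom Agt)) : Set (Form Atom Agt) :=
  nnfNeg '' S

/-- Belief erasure: `P ⊖ Q = max(↑P ∖ ↓Q)`. -/
def eraseKB {Atom Agt : Type} (P Q : Set (Form Atom Agt)) : Set (Form Atom Agt) :=
  maxSet (upSet P \ downSet Q)

/-- Belief update: `P ⋄ Q = max((P ⊖ ¬Q) ∪ Q)`. -/
def updateKB {Atom Agt : Type} (P Q : Set (Form Atom Agt)) : Set (Form Atom Agt) :=
  maxSet (eraseKB P (negKB Q) ∪ Q)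

/-- Meet: `P ⊓ Q = max(↑P ∩ ↑Q)`. -/
def meetKB {Atom Agt : Type} (P Q : Set (Form Atom Agt)) : Set (Form Atom Agt) :=
  maxSet (upSet P ∩ upSet Q)
section Aux

open Classical

variable {Atom Agt : Type}

/-- Value of an RML at a "uniform" world with valuation `V`. -/
def litVal (V : Atom → Prop) : Form Atom Agt → Prop
  | Form.atom p => V p
  | Form.neg φ => ¬ litVal V φ
  | Form.box _ φ => litVal V φ
  | _ => True

lemma entails_iff {φ ψ : Form Atom Agt} :
    Entails φ ψ ↔ ∀ M : Kripke Atom Agt, M.Serial → ∀ w, Sat M w φ → Sat M w ψ := by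
  constructor
  · intro h M hs w hφ
    exact h M hs w (by rintro x hx; rw [Set.mem_singleton_iff] at hx; subst hx; exact hφ)
  · intro h M hs w hall
    exact h M hs w (hall φ rfl)

lemma entails_refl (φ : Form Atom Agt) : Entails φ φ :=
  entails_iff.2 fun _ _ _ h => h

lemma entails_trans {φ ψ χ : Form Atom Agt} (h1 : Entails φ ψ) (h2 : Entails ψ χ) :
    Entails φ χ :=
  entails_iff.2 fun M hs w h => (entails_iff.1 h2) M hs w ((entails_iff.1 h1) M hs w h)

lemma sat_uniform (M : Kripke Atom Agt) (w : M.W)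
    (hw : ∀ k v, M.R k w v ↔ v = w) {φ : Form Atom Agt} (hφ : IsRML φ) :
    Sat M w φ ↔ litVal (M.val w) φ := by
  induction hφ with
  | pos p => rfl
  | neg p => rfl
  | box i h ih =>
    show (∀ v, M.R i w v → Sat M v _) ↔ _
    constructor
    · intro H; exact ih.1 (H w ((hw i w).2 rfl))
    · intro H v hv; rw [(hw i v).1 hv]; exact ih.2 H
  | dia i h ih =>
    show (¬ ∀ v, M.R i w v → ¬ Sat M v _) ↔ ¬ ¬ litVal _ _
    constructor
    · intro H hn
      exact H fun v hv hs => hn (ih.1 (by rwa [(hw i v).1 hv] at hs))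
    · intro H hn
      exact H fun hs => hn w ((hw i w).2 rfl) (ih.2 hs)

lemma exists_litVal {φ : Form Atom Agt} (hφ : IsRML φ) :
    (∃ V : Atom → Prop, litVal V φ) ∧ (∃ V : Atom → Prop, ¬ litVal V φ) := by
  induction hφ with
  | pos p => exact ⟨⟨fun _ => True, trivial⟩, ⟨fun _ => False, fun h => h⟩⟩
  | neg p =>
    exact ⟨⟨fun _ => False, fun h => h⟩, ⟨fun _ => True, fun h => h trivial⟩⟩
  | box i h ih => exact ih
  | dia i h ih =>
    obtain ⟨⟨V1, h1⟩, ⟨V2, h2⟩⟩ := ih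
    refine ⟨⟨V1, ?_⟩, ⟨V2, ?_⟩⟩
    · show ¬ ¬ litVal V1 _; exact not_not_intro h1
    · show ¬ ¬ ¬ litVal V2 _; exact not_not_intro h2

/-- A three-world model: a root `none`, and two uniform worlds `some true`,
`some false`; agent `k` reaches `some true` from the root iff `A k`, and
`some false` iff `B k`. -/
def M3 (A B : Agt → Prop) (Vr V1 V2 : Atom → Prop) : Kripke Atom Agt where
  W := Option Bool
  val w := match w with
    | none => Vr
    | some true => V1
    | some false => V2
  R k w v := match w with
    | none => (A k ∧ v = some true) ∨ (B k ∧ v = some false)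
    | some b => v = some b

lemma M3_serial {A B : Agt → Prop} {Vr V1 V2 : Atom → Prop} (h : ∀ k, A k ∨ B k) :
    (M3 (Atom := Atom) A B Vr V1 V2).Serial := by
  intro k w
  match w with
  | some b => exact ⟨some b, rfl⟩
  | none =>
    rcases h k with hk | hk
    · exact ⟨some true, Or.inl ⟨hk, rfl⟩⟩
    · exact ⟨some false, Or.inr ⟨hk, rfl⟩⟩

lemma M3_child_true {A B : Agt → Prop} {Vr V1 V2 : Atom → Prop} {φ : Form Atom Agt}
    (hφ : IsRML φ) : Sat (M3 A B Vr V1 V2) (some true) φ ↔ litVal V1 φ :=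
  sat_uniform _ _ (fun _ _ => Iff.rfl) hφ

lemma M3_child_false {A B : Agt → Prop} {Vr V1 V2 : Atom → Prop} {φ : Form Atom Agt}
    (hφ : IsRML φ) : Sat (M3 A B Vr V1 V2) (some false) φ ↔ litVal V2 φ :=
  sat_uniform _ _ (fun _ _ => Iff.rfl) hφ

lemma M3_root_box {A B : Agt → Prop} {Vr V1 V2 : Atom → Prop} {i : Agt}
    {φ : Form Atom Agt} :
    Sat (M3 A B Vr V1 V2) none (Form.box i φ) ↔
      ((A i → Sat (M3 A B Vr V1 V2) (some true) φ) ∧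
       (B i → Sat (M3 A B Vr V1 V2) (some false) φ)) := by
  show (∀ v, ((A i ∧ v = some true) ∨ (B i ∧ v = some false)) → _) ↔ _
  constructor
  · intro H
    exact ⟨fun hA => H _ (Or.inl ⟨hA, rfl⟩), fun hB => H _ (Or.inr ⟨hB, rfl⟩)⟩
  · rintro ⟨H1, H2⟩ v (⟨hA, rfl⟩ | ⟨hB, rfl⟩)
    · exact H1 hA
    · exact H2 hB

lemma M3_root_dia {A B : Agt → Prop} {Vr V1 V2 : Atom → Prop} {i : Agt}
    {φ : Form Atom Agt} :
    Sat (M3 A B Vr V1 V2) none (Form.dia i φ) ↔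
      ((A i ∧ Sat (M3 A B Vr V1 V2) (some true) φ) ∨
       (B i ∧ Sat (M3 A B Vr V1 V2) (some false) φ)) := by
  show (¬ ∀ v, ((A i ∧ v = some true) ∨ (B i ∧ v = some false)) → ¬ _) ↔ _
  constructor
  · intro H
    by_contra hn
    push_neg at hn
    exact H (by
      rintro v (⟨hA, rfl⟩ | ⟨hB, rfl⟩)
      · exact fun hs => hn.1 hA hs
      · exact fun hs => hn.2 hB hs)
  · rintro (⟨hA, hs⟩ | ⟨hB, hs⟩) H
    · exact H _ (Or.inl ⟨hA, rfl⟩) hs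
    · exact H _ (Or.inr ⟨hB, rfl⟩) hs

lemma M3_root_atom {A B : Agt → Prop} {Vr V1 V2 : Atom → Prop} {p : Atom} :
    Sat (Agt := Agt) (M3 A B Vr V1 V2) none (Form.atom p) ↔ Vr p := Iff.rfl

/-- Extending a model with a fresh root below a chosen world `w0`. -/
def extM (M : Kripke Atom Agt) (w0 : M.W) : Kripke Atom Agt where
  W := Option M.W
  val w := match w with
    | none => fun _ => True
    | some u => M.val u
  R k w v := match w with
    | none => v = some w0
    | some u => ∃ x, M.R k u x ∧ v = some x

lemma extM_serial {M : Kripke Atom Agt} {w0 : M.W} (hM : M.Serial) :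
    (extM M w0).Serial := by
  intro k w
  match w with
  | none => exact ⟨some w0, rfl⟩
  | some u =>
    obtain ⟨v, hv⟩ := hM k u
    exact ⟨some v, v, hv, rfl⟩

lemma sat_extM {M : Kripke Atom Agt} {w0 : M.W} (α : Form Atom Agt) :
    ∀ u : M.W, Sat (extM M w0) (some u) α ↔ Sat M u α := by
  induction α with
  | top => intro u; exact Iff.rfl
  | bot => intro u; exact Iff.rfl
  | atom p => intro u; exact Iff.rfl
  | neg φ ih => intro u; exact not_congr (ih u)
  | and φ ψ ih1 ih2 => intro u; exact and_congr (ih1 u) (ih2 u)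
  | box i φ ih =>
    intro u
    constructor
    · intro H v hv
      exact (ih v).1 (H (some v) ⟨v, hv, rfl⟩)
    · rintro H x ⟨v, hv, rfl⟩
      exact (ih v).2 (H v hv)

/-- The finite set of weakenings of an RML (same skeleton, boxes possibly
weakened into diamonds). -/
def weaken : Form Atom Agt → Set (Form Atom Agt)
  | Form.atom p => {Form.atom p}
  | Form.neg (Form.atom p) => {Form.neg (Form.atom p)}
  | Form.neg (Form.box i (Form.neg φ)) => Form.dia i '' weaken φ
  | Form.box i φ => (Form.box i '' weaken φ) ∪ (Form.dia i '' weaken φ)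
  | _ => ∅

lemma weaken_finite {φ : Form Atom Agt} (hφ : IsRML φ) : (weaken φ).Finite := by
  induction hφ with
  | pos p => exact Set.finite_singleton _
  | neg p => exact Set.finite_singleton _
  | box i h ih => exact (ih.image _).union (ih.image _)
  | dia i h ih => exact ih.image _

lemma weaken_rml {φ ψ : Form Atom Agt} (hφ : IsRML φ) (hψ : ψ ∈ weaken φ) : IsRML ψ := by
  induction hφ generalizing ψ with
  | pos p => rw [Set.mem_singleton_iff.1 hψ]; exact IsRML.pos p
  | neg p => rw [Set.mem_singleton_iff.1 hψ]; exact IsRML.neg p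
  | box i h ih =>
    rcases hψ with ⟨χ, hχ, rfl⟩ | ⟨χ, hχ, rfl⟩
    · exact IsRML.box i (ih hχ)
    · exact IsRML.dia i (ih hχ)
  | dia i h ih =>
    obtain ⟨χ, hχ, rfl⟩ := hψ
    exact IsRML.dia i (ih hχ)

/-- Core shape lemma: any RML entailed by an RML `χ` is a weakening of `χ`. -/
lemma entails_shape {χ : Form Atom Agt} (hχ : IsRML χ) :
    ∀ {ψ : Form Atom Agt}, IsRML ψ → Entails χ ψ → ψ ∈ weaken χ := by
  induction hχ with
  | pos p =>
    intro ψ hψ hent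
    cases hψ with
    | pos q =>
      -- q must equal p
      have := (entails_iff.1 hent) (M3 (fun _ => True) (fun _ => False)
          (fun a => a = p) (fun _ => True) (fun _ => True))
          (M3_serial fun _ => Or.inl trivial) none (by exact rfl)
      rw [M3_root_atom] at this
      rw [this]; exact rfl
    | neg q =>
      exfalso
      have := (entails_iff.1 hent) (M3 (fun _ => True) (fun _ => False)
          (fun _ => True) (fun _ => True) (fun _ => True))
          (M3_serial fun _ => Or.inl trivial) none trivial
      exact this trivial
    | @box j φ' hφ' =>
      exfalso
      obtain ⟨V1, hV1⟩ := (exists_litVal hφ').2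
      have := (entails_iff.1 hent) (M3 (fun _ => True) (fun _ => False)
          (fun _ => True) V1 V1)
          (M3_serial fun _ => Or.inl trivial) none trivial
      exact hV1 ((M3_child_true hφ').1 (M3_root_box.1 this |>.1 trivial))
    | @dia j φ' hφ' =>
      exfalso
      obtain ⟨V1, hV1⟩ := (exists_litVal hφ').2
      have := (entails_iff.1 hent) (M3 (fun _ => True) (fun _ => False)
          (fun _ => True) V1 V1)
          (M3_serial fun _ => Or.inl trivial) none trivial
      rcases M3_root_dia.1 this with ⟨_, hs⟩ | ⟨hf, _⟩
      · exact hV1 ((M3_child_true hφ').1 hs)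
      · exact hf
  | neg p =>
    intro ψ hψ hent
    cases hψ with
    | pos q =>
      exfalso
      have := (entails_iff.1 hent) (M3 (fun _ => True) (fun _ => False)
          (fun _ => False) (fun _ => True) (fun _ => True))
          (M3_serial fun _ => Or.inl trivial) none (by exact fun h => h)
      exact this
    | neg q =>
      have := (entails_iff.1 hent) (M3 (fun _ => True) (fun _ => False)
          (fun a => ¬ (a = p)) (fun _ => True) (fun _ => True))
          (M3_serial fun _ => Or.inl trivial) none (by exact fun h => h rfl)
      have hq : q = p := by
        by_contra hn
        exact this hn
      rw [hq]; exact rfl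
    | @box j φ' hφ' =>
      exfalso
      obtain ⟨V1, hV1⟩ := (exists_litVal hφ').2
      have := (entails_iff.1 hent) (M3 (fun _ => True) (fun _ => False)
          (fun _ => False) V1 V1)
          (M3_serial fun _ => Or.inl trivial) none (by exact fun h => h)
      exact hV1 ((M3_child_true hφ').1 (M3_root_box.1 this |>.1 trivial))
    | @dia j φ' hφ' =>
      exfalso
      obtain ⟨V1, hV1⟩ := (exists_litVal hφ').2
      have := (entails_iff.1 hent) (M3 (fun _ => True) (fun _ => False)
          (fun _ => False) V1 V1)
          (M3_serial fun _ => Or.inl trivial) none (by exact fun h => h)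
      rcases M3_root_dia.1 this with ⟨_, hs⟩ | ⟨hf, _⟩
      · exact hV1 ((M3_child_true hφ').1 hs)
      · exact hf
  | @box i φ hφ ih =>
    intro ψ hψ hent
    obtain ⟨V1, hV1⟩ := (exists_litVal hφ).1
    cases hψ with
    | pos q =>
      exfalso
      have := (entails_iff.1 hent) (M3 (fun _ => True) (fun _ => False)
          (fun _ => False) V1 V1)
          (M3_serial fun _ => Or.inl trivial)
          none (M3_root_box.2 ⟨fun _ => (M3_child_true hφ).2 hV1, fun h => h.elim⟩)
      exact this
    | neg q =>
      exfalso
      have := (entails_iff.1 hent) (M3 (fun _ => True) (fun _ => False)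
          (fun _ => True) V1 V1)
          (M3_serial fun _ => Or.inl trivial)
          none (M3_root_box.2 ⟨fun _ => (M3_child_true hφ).2 hV1, fun h => h.elim⟩)
      exact this trivial
    | @box j ψ' hψ' =>
      obtain ⟨V2, hV2⟩ := (exists_litVal hψ').2
      have hji : j = i := by
        by_contra hn
        have := (entails_iff.1 hent) (M3 (fun k => k = i) (fun k => ¬ (k = i))
            (fun _ => True) V1 V2)
            (M3_serial fun k => Classical.em (k = i)) none
            (M3_root_box.2 ⟨fun _ => (M3_child_true hφ).2 hV1, fun h => absurd rfl h⟩)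
        exact hV2 ((M3_child_false hψ').1 (M3_root_box.1 this |>.2 hn))
      subst hji
      have hEnt : Entails φ ψ' := by
        rw [entails_iff]
        intro M hs w hw
        have h1 : Sat (extM M w) none (Form.box j φ) := by
          intro v hv
          have hv' : v = some w := hv
          rw [hv']
          exact (sat_extM φ w).2 hw
        have h2 := (entails_iff.1 hent) (extM M w) (extM_serial hs) none h1
        exact (sat_extM ψ' w).1 (h2 (some w) rfl)
      exact Or.inl ⟨ψ', ih hψ' hEnt, rfl⟩
    | @dia j ψ' hψ' =>
      obtain ⟨V2, hV2⟩ := (exists_litVal hψ').2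
      have hji : j = i := by
        by_contra hn
        have := (entails_iff.1 hent) (M3 (fun k => k = i) (fun k => ¬ (k = i))
            (fun _ => True) V1 V2)
            (M3_serial fun k => Classical.em (k = i)) none
            (M3_root_box.2 ⟨fun _ => (M3_child_true hφ).2 hV1, fun h => absurd rfl h⟩)
        rcases M3_root_dia.1 this with ⟨hA, _⟩ | ⟨_, hs⟩
        · exact hn hA
        · exact hV2 ((M3_child_false hψ').1 hs)
      subst hji
      have hEnt : Entails φ ψ' := by
        rw [entails_iff]
        intro M hs w hw
        have h1 : Sat (extM M w) none (Form.box j φ) := by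
          intro v hv
          have hv' : v = some w := hv
          rw [hv']
          exact (sat_extM φ w).2 hw
        have h2 := (entails_iff.1 hent) (extM M w) (extM_serial hs) none h1
        -- h2 : Sat _ none (dia j ψ')
        by_contra hc
        exact h2 (by
          intro v hv
          have hv' : v = some w := hv
          rw [hv']
          intro hs'
          exact hc ((sat_extM ψ' w).1 hs'))
      exact Or.inr ⟨ψ', ih hψ' hEnt, rfl⟩
  | @dia i φ hφ ih =>
    intro ψ hψ hent
    obtain ⟨V1, hV1⟩ := (exists_litVal hφ).1
    cases hψ with
    | pos q =>
      exfalso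
      have := (entails_iff.1 hent) (M3 (fun _ => True) (fun _ => False)
          (fun _ => False) V1 V1)
          (M3_serial fun _ => Or.inl trivial)
          none (M3_root_dia.2 (Or.inl ⟨trivial, (M3_child_true hφ).2 hV1⟩))
      exact this
    | neg q =>
      exfalso
      have := (entails_iff.1 hent) (M3 (fun _ => True) (fun _ => False)
          (fun _ => True) V1 V1)
          (M3_serial fun _ => Or.inl trivial)
          none (M3_root_dia.2 (Or.inl ⟨trivial, (M3_child_true hφ).2 hV1⟩))
      exact this trivial
    | @box j ψ' hψ' =>
      exfalso
      obtain ⟨V2, hV2⟩ := (exists_litVal hψ').2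
      have := (entails_iff.1 hent) (M3 (fun _ => True) (fun _ => True)
          (fun _ => True) V1 V2)
          (M3_serial fun _ => Or.inl trivial)
          none (M3_root_dia.2 (Or.inl ⟨trivial, (M3_child_true hφ).2 hV1⟩))
      exact hV2 ((M3_child_false hψ').1 (M3_root_box.1 this |>.2 trivial))
    | @dia j ψ' hψ' =>
      obtain ⟨V2, hV2⟩ := (exists_litVal hψ').2
      have hji : j = i := by
        by_contra hn
        have := (entails_iff.1 hent) (M3 (fun k => k = i) (fun k => ¬ (k = i))
            (fun _ => True) V1 V2)
            (M3_serial fun k => Classical.em (k = i)) none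
            (M3_root_dia.2 (Or.inl ⟨rfl, (M3_child_true hφ).2 hV1⟩))
        rcases M3_root_dia.1 this with ⟨hA, _⟩ | ⟨_, hs⟩
        · exact hn hA
        · exact hV2 ((M3_child_false hψ').1 hs)
      subst hji
      have hEnt : Entails φ ψ' := by
        rw [entails_iff]
        intro M hs w hw
        have h1 : Sat (extM M w) none (Form.dia j φ) := by
          intro H
          exact H (some w) rfl ((sat_extM φ w).2 hw)
        have h2 := (entails_iff.1 hent) (extM M w) (extM_serial hs) none h1
        by_contra hc
        exact h2 (by
          intro v hv
          have hv' : v = some w := hv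
          rw [hv']
          intro hs'
          exact hc ((sat_extM ψ' w).1 hs'))
      exact ⟨ψ', ih hψ' hEnt, rfl⟩

lemma upSet_finite {P : Set (Form Atom Agt)} (hP : IsPEKB P) : (upSet P).Finite := by
  apply Set.Finite.subset (Set.Finite.biUnion hP.1 (fun χ hχ => weaken_finite (hP.2 χ hχ)))
  rintro ψ ⟨hψR, χ, hχP, hent⟩
  exact Set.mem_biUnion hχP (entails_shape (hP.2 χ hχP) hψR hent)

lemma exists_maximal {S : Set (Form Atom Agt)} (hS : S.Finite) {φ : Form Atom Agt}
    (hφ : φ ∈ S) : ∃ m ∈ maxSet S, Entails m φ := by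
  classical
  set g : Form Atom Agt → ℕ := fun ψ => ({χ ∈ S | Entails ψ χ}).ncard with hg
  have hT : ({ψ ∈ S | Entails ψ φ}).Finite := hS.subset (Set.sep_subset _ _)
  obtain ⟨a, ⟨haS, haφ⟩, hmax⟩ :=
    Set.Finite.exists_maximalFor g _ hT ⟨φ, hφ, entails_refl φ⟩
  refine ⟨a, ⟨haS, ?_⟩, haφ⟩
  intro χ hχ hent
  by_contra hn
  have hsub : {x ∈ S | Entails a x} ⊂ {x ∈ S | Entails χ x} := by
    constructor
    · rintro x ⟨hxS, hx⟩
      exact ⟨hxS, entails_trans hent hx⟩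
    · intro hsup
      exact hn (hsup ⟨hχ, entails_refl χ⟩).2
  have hlt : g a < g χ := Set.ncard_lt_ncard hsub (hS.subset (Set.sep_subset _ _))
  have := hmax (j := χ) ⟨hχ, entails_trans hent haφ⟩ (le_of_lt hlt)
  omega

lemma sat_nnfNeg {φ : Form Atom Agt} (hφ : IsRML φ) (M : Kripke Atom Agt) (w : M.W) :
    Sat M w (nnfNeg φ) ↔ ¬ Sat M w φ := by
  induction hφ generalizing w with
  | pos p => exact Iff.rfl
  | neg p =>
    show Sat M w _ ↔ ¬ ¬ Sat M w _
    exact Iff.symm not_not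
  | @box i ψ h ih =>
    show Sat M w (Form.dia i (nnfNeg ψ)) ↔ _
    constructor
    · intro H hb
      exact H fun v hv hs => (ih v).1 hs (hb v hv)
    · intro H
      intro Hf
      apply H
      intro v hv
      by_contra hc
      exact Hf v hv ((ih v).2 hc)
  | @dia i ψ h ih =>
    show Sat M w (Form.box i (nnfNeg ψ)) ↔ ¬ ¬ Sat M w (Form.box i (Form.neg ψ))
    rw [not_not]
    constructor
    · intro H v hv hs
      exact (ih v).1 (H v hv) hs
    · intro H v hv
      exact (ih v).2 (H v hv)

end Aux

/-- KM erasure postulate E2 for PEKB belief erasure: if `P` is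
consistent and `P` entails the NNF-negation of every element of `Q`, then
`P ⊖ Q ≡ P`. -/
theorem km_erasure_e2 {Atom Agt : Type}
    (P Q : Set (Form Atom Agt)) (hP : IsPEKB P) (hQ : IsPEKB Q)
    (hcons : Consistent P) (h : KBEntails P (negKB Q)) :
    KBEquiv (eraseKB P Q) P := by
  have hPsub : P ⊆ upSet P \ downSet Q := by
    intro φ hφ
    constructor
    · exact ⟨hP.2 φ hφ, φ, hφ, entails_refl φ⟩
    · rintro ⟨hφR, ψ, hψQ, hent⟩
      obtain ⟨M, hser, w, hall⟩ := hcons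
      have h1 : Sat M w ψ := (entails_iff.1 hent) M hser w (hall φ hφ)
      have h2 : Sat M w (nnfNeg ψ) := h (nnfNeg ψ) ⟨ψ, hψQ, rfl⟩ M hser w hall
      exact (sat_nnfNeg (hQ.2 ψ hψQ) M w).1 h2 h1
  have hfin : (upSet P \ downSet Q).Finite :=
    (upSet_finite hP).subset Set.diff_subset
  constructor
  · -- eraseKB P Q entails P
    intro φ hφP
    obtain ⟨m, hm, hment⟩ := exists_maximal hfin (hPsub hφP)
    intro M hser w hall
    exact (entails_iff.1 hment) M hser w (hall m hm)
  · -- P entails eraseKB P Q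
    intro φ hφE
    obtain ⟨⟨⟨_, χ, hχP, hent⟩, _⟩, _⟩ := hφE
    intro M hser w hall
    exact (entails_iff.1 hent) M hser w (hall χ hχP)
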